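/- arXiv:2410.20517 — 7 statements merged into one kernel-verified Lean document; each statement's English description precedes it below -/
import Mathlib

section
/- Let I ⊆ ℝ be an open interval and let β : ℝ → ℝ be twice differentiable on I with β(z) > 0 for every z ∈ I. Then β(z)·β''(z) = 2·β'(z)² for all z ∈ I if and only if there exist real constants c₁, c₂ such that c₁·z + c₂ > 0 and β(z) = (c₁·z + c₂)⁻¹ for all z ∈ I. -/
/-!
Since `(1/β)'' = (2 β'² - β β'') / β³`, the equation `β β'' = 2 β'²` says exactly that `1/β`
has vanishing second derivative, i.e. that `1/β` is affine on the interval.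
-/

open Filter Topology

theorem IsOpen.deriv_deriv_eq_zero_iff_exists_affine {s : Set ℝ} (hs : IsOpen s)
    (hs' : IsPreconnected s) {f : ℝ → ℝ} (hf : DifferentiableOn ℝ f s)
    (hf' : DifferentiableOn ℝ (deriv f) s) :
    (∀ x ∈ s, deriv (deriv f) x = 0) ↔ ∃ a b : ℝ, ∀ x ∈ s, f x = a * x + b := by
  constructor
  · intro h
    obtain ⟨a, ha⟩ := hs.exists_is_const_of_deriv_eq_zero hs' hf' h
    obtain ⟨b, hb⟩ := hs.exists_eq_add_of_deriv_eq hs' hf (differentiableOn_id.const_mul a)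
      fun x hx => by simp [ha x hx]
    exact ⟨a, b, hb⟩
  · rintro ⟨a, b, hab⟩ x hx
    have hderiv : deriv f =ᶠ[𝓝 x] fun _ => a := by
      filter_upwards [hs.mem_nhds hx] with y hy
      have hy' : f =ᶠ[𝓝 y] fun t => a * t + b := eventually_of_mem (hs.mem_nhds hy) hab
      rw [hy'.deriv_eq]
      simp
    simp [hderiv.deriv_eq]

theorem hasDerivAt_deriv_inv {β : ℝ → ℝ} {z : ℝ}
    (hβ : ∀ᶠ w in 𝓝 z, DifferentiableAt ℝ β w ∧ β w ≠ 0)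
    (hβ' : DifferentiableAt ℝ (deriv β) z) :
    HasDerivAt (deriv fun w => (β w)⁻¹)
      ((2 * deriv β z ^ 2 - β z * deriv (deriv β) z) / β z ^ 3) z := by
  have hfirst : (deriv fun w => (β w)⁻¹) =ᶠ[𝓝 z] fun w => -deriv β w / β w ^ 2 := by
    filter_upwards [hβ] with w ⟨hdw, hw⟩
    exact (hdw.hasDerivAt.inv hw).deriv
  obtain ⟨hdz, hz⟩ := hβ.self_of_nhds
  refine ((hβ'.hasDerivAt.neg.div (hdz.hasDerivAt.pow 2) (pow_ne_zero 2 hz)).congr_deriv ?_)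
    |>.congr_of_eventuallyEq hfirst
  simp only [Pi.pow_apply, Pi.neg_apply]
  field_simp
  ring

/-- Let `I ⊆ ℝ` be an open interval and let `β : ℝ → ℝ` be twice
differentiable on `I` with `β z > 0` for every `z ∈ I`. Then
`β z * β'' z = 2 * (β' z)^2` for all `z ∈ I` if and only if there exist real
constants `c₁, c₂` such that `c₁ * z + c₂ > 0` and `β z = (c₁ * z + c₂)⁻¹`
for all `z ∈ I`. -/
theorem stmt0 (I : Set ℝ) (hI : IsOpen I) (hI' : I.OrdConnected)
    (β : ℝ → ℝ)
    (hpos : ∀ z ∈ I, 0 < β z)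
    (hdiff : ∀ z ∈ I, DifferentiableAt ℝ β z)
    (hdiff2 : ∀ z ∈ I, DifferentiableAt ℝ (deriv β) z) :
    (∀ z ∈ I, β z * deriv (deriv β) z = 2 * (deriv β z) ^ 2) ↔
      ∃ c₁ c₂ : ℝ, ∀ z ∈ I, 0 < c₁ * z + c₂ ∧ β z = (c₁ * z + c₂)⁻¹ := by
  have hβ : ∀ z ∈ I, ∀ᶠ w in 𝓝 z, DifferentiableAt ℝ β w ∧ β w ≠ 0 := fun z hz => by
    filter_upwards [hI.mem_nhds hz] with w hw using ⟨hdiff w hw, (hpos w hw).ne'⟩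
  have hinv'' := fun z hz => hasDerivAt_deriv_inv (hβ z hz) (hdiff2 z hz)
  have hode : ∀ z ∈ I, β z * deriv (deriv β) z = 2 * deriv β z ^ 2 ↔
      deriv (deriv fun w => (β w)⁻¹) z = 0 := fun z hz => by
    rw [(hinv'' z hz).deriv, div_eq_zero_iff, sub_eq_zero, eq_comm,
      or_iff_left (pow_ne_zero 3 (hpos z hz).ne')]
  have haffine := hI.deriv_deriv_eq_zero_iff_exists_affine (f := fun w => (β w)⁻¹)
    hI'.isPreconnected
    (fun z hz => ((hdiff z hz).inv (hpos z hz).ne').differentiableWithinAt)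
    (fun z hz => (hinv'' z hz).differentiableAt.differentiableWithinAt)
  rw [forall₂_congr hode, haffine]
  refine exists₂_congr fun a b => forall₂_congr fun z hz => ⟨fun h => ?_, fun h => ?_⟩
  · rw [← h, inv_inv]
    exact ⟨inv_pos.2 (hpos z hz), rfl⟩
  · rw [h.2, inv_inv]
end

section
/- Let m ≥ 2 be an integer, let k > 0 satisfy k² = 1/(m+1), let t be a real number, and let β : (0,∞) → ℝ be given by β(z) = z^t. Then for every z > 0, m(1+k²)·β'(z)⁴ + ((m²−2m+2)(1−k²) − 2m)/2 · β(z)·β'(z)²·β''(z) − (m−2)(1−k²)/2 · β(z)²·β'(z)·β'''(z) − (m−2)(m−4)(1−k²)/4 · β(z)²·β''(z)² = (m·t²/(4(m+1))) · ((m²+4)t² + (2m+4)t + 2m − m²) · z^{4t−4}. -/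
lemma deriv_rpow_on (t c : ℝ) (f : ℝ → ℝ) (hf : ∀ z : ℝ, 0 < z → f z = c * z ^ t) :
    ∀ z : ℝ, 0 < z → deriv f z = c * t * z ^ (t - 1) := by
  intro z hz
  have hev : f =ᶠ[nhds z] fun x => c * x ^ t :=
    Filter.eventually_of_mem (isOpen_Ioi.mem_nhds hz) (fun x hx => hf x hx)
  rw [hev.deriv_eq,
    ((Real.hasDerivAt_rpow_const (p := t) (Or.inl hz.ne')).const_mul c).deriv]
  ring

/-- Let `m ≥ 2` be an integer, `k > 0` with `k² = 1/(m+1)`, `t` real,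
and `β : (0,∞) → ℝ` given by `β z = z ^ t`. Then for every `z > 0`,
`m(1+k²)β'⁴ + ((m²−2m+2)(1−k²) − 2m)/2 · ββ'²β'' − (m−2)(1−k²)/2 · β²β'β'''
 − (m−2)(m−4)(1−k²)/4 · β²β''²
 = (mt²/(4(m+1))) ((m²+4)t² + (2m+4)t + 2m − m²) z^(4t−4)`. -/
theorem stmt2 (m : ℕ) (hm : 2 ≤ m) (k t : ℝ) (hk : 0 < k)
    (hk2 : k ^ 2 = 1 / ((m : ℝ) + 1))
    (β : ℝ → ℝ) (hβ : ∀ z : ℝ, 0 < z → β z = z ^ t) :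
    ∀ z : ℝ, 0 < z →
      (m : ℝ) * (1 + k ^ 2) * (deriv β z) ^ 4
        + (((m : ℝ) ^ 2 - 2 * (m : ℝ) + 2) * (1 - k ^ 2) - 2 * (m : ℝ)) / 2 *
            (β z * (deriv β z) ^ 2 * deriv (deriv β) z)
        - ((m : ℝ) - 2) * (1 - k ^ 2) / 2 *
            ((β z) ^ 2 * deriv β z * deriv (deriv (deriv β)) z)
        - ((m : ℝ) - 2) * ((m : ℝ) - 4) * (1 - k ^ 2) / 4 *
            ((β z) ^ 2 * (deriv (deriv β) z) ^ 2)
      = ((m : ℝ) * t ^ 2 / (4 * ((m : ℝ) + 1))) *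
          (((m : ℝ) ^ 2 + 4) * t ^ 2 + (2 * (m : ℝ) + 4) * t + 2 * (m : ℝ) - (m : ℝ) ^ 2) *
          z ^ (4 * t - 4) := by
  intro z hz
  have hβ' : ∀ z : ℝ, 0 < z → β z = 1 * z ^ t := by
    intro z hz; rw [hβ z hz, one_mul]
  have h1 := deriv_rpow_on t 1 β hβ'
  have h2 := deriv_rpow_on (t - 1) (1 * t) (deriv β) h1
  have h3 := deriv_rpow_on (t - 1 - 1) (1 * t * (t - 1)) (deriv (deriv β)) h2
  have hM : ((m : ℝ) + 1) ≠ 0 := by positivity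
  have pw : ∀ (a : ℝ) (n : ℕ), (z ^ a) ^ n = z ^ (a * n) := by
    intro a n
    rw [← Real.rpow_natCast (z ^ a) n, ← Real.rpow_mul hz.le]
  have mul' : ∀ a b : ℝ, z ^ a * z ^ b = z ^ (a + b) :=
    fun a b => (Real.rpow_add hz a b).symm
  rw [hβ z hz, h1 z hz, h2 z hz, h3 z hz, hk2]
  have e1 : (1 * t * z ^ (t - 1)) ^ 4 = t ^ 4 * z ^ (4 * t - 4) := by
    rw [show (1 * t * z ^ (t - 1)) ^ 4 = t ^ 4 * (z ^ (t - 1)) ^ 4 from by ring,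
      pw]
    congr 1; push_cast; ring
  have e2 : z ^ t * (1 * t * z ^ (t - 1)) ^ 2 * (1 * t * (t - 1) * z ^ (t - 1 - 1))
      = t ^ 2 * (t * (t - 1)) * z ^ (4 * t - 4) := by
    rw [show z ^ t * (1 * t * z ^ (t - 1)) ^ 2 * (1 * t * (t - 1) * z ^ (t - 1 - 1))
        = t ^ 2 * (t * (t - 1)) * (z ^ t * (z ^ (t - 1)) ^ 2 * z ^ (t - 1 - 1)) from by ring,
      pw, mul', mul']
    congr 1; push_cast; ring
  have e3 : (z ^ t) ^ 2 * (1 * t * z ^ (t - 1)) *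
        (1 * t * (t - 1) * (t - 1 - 1) * z ^ (t - 1 - 1 - 1))
      = t * (t * (t - 1) * (t - 1 - 1)) * z ^ (4 * t - 4) := by
    rw [show (z ^ t) ^ 2 * (1 * t * z ^ (t - 1)) *
          (1 * t * (t - 1) * (t - 1 - 1) * z ^ (t - 1 - 1 - 1))
        = t * (t * (t - 1) * (t - 1 - 1)) *
            ((z ^ t) ^ 2 * z ^ (t - 1) * z ^ (t - 1 - 1 - 1)) from by ring,
      pw, mul', mul']
    congr 1; push_cast; ring
  have e4 : (z ^ t) ^ 2 * (1 * t * (t - 1) * z ^ (t - 1 - 1)) ^ 2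
      = (t * (t - 1)) ^ 2 * z ^ (4 * t - 4) := by
    rw [show (z ^ t) ^ 2 * (1 * t * (t - 1) * z ^ (t - 1 - 1)) ^ 2
        = (t * (t - 1)) ^ 2 * ((z ^ t) ^ 2 * (z ^ (t - 1 - 1)) ^ 2) from by ring]
    simp only [pw]
    rw [mul']
    congr 1; push_cast; ring
  rw [e1, e2, e3, e4]
  field_simp
  ring
end

section
/- Let m ≥ 3 be an integer and let k > 0 satisfy k² = 1/(m+1). Then each of the functions β(z) = z^{−1} and β(z) = z^{(m²−2m)/(m²+4)} satisfies, for every z > 0, the equation m(1+k²)·β'(z)⁴ + ((m²−2m+2)(1−k²) − 2m)/2 · β(z)·β'(z)²·β''(z) − (m−2)(1−k²)/2 · β(z)²·β'(z)·β'''(z) − (m−2)(m−4)(1−k²)/4 · β(z)²·β''(z)² = 0. -/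
/-- Derivative of a constant multiple of a power function on the positive reals. -/
lemma derivAux (f : ℝ → ℝ) (c p : ℝ) (hf : ∀ z : ℝ, 0 < z → f z = c * z ^ p) :
    ∀ z : ℝ, 0 < z → deriv f z = (c * p) * z ^ (p - 1) := by
  intro z hz
  have hev : f =ᶠ[nhds z] fun x => c * x ^ p := by
    filter_upwards [isOpen_Ioi.mem_nhds hz] with x hx using hf x hx
  rw [hev.deriv_eq,
    ((Real.hasDerivAt_rpow_const (x := z) (p := p) (Or.inl hz.ne')).const_mul c).deriv]
  ring

/-- The algebraic identity at the heart of the computation. -/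
lemma keyAlg (m : ℕ) (k p z : ℝ) (hz : 0 < z)
    (hk2 : k ^ 2 = 1 / ((m : ℝ) + 1))
    (hp : p = -1 ∨ p = ((m : ℝ) ^ 2 - 2 * (m : ℝ)) / ((m : ℝ) ^ 2 + 4)) :
    (m : ℝ) * (1 + k ^ 2) * (p * z ^ (p - 1)) ^ 4
      + (((m : ℝ) ^ 2 - 2 * (m : ℝ) + 2) * (1 - k ^ 2) - 2 * (m : ℝ)) / 2 *
          (z ^ p * (p * z ^ (p - 1)) ^ 2 * (p * (p - 1) * z ^ (p - 2)))
      - ((m : ℝ) - 2) * (1 - k ^ 2) / 2 *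
          ((z ^ p) ^ 2 * (p * z ^ (p - 1)) * (p * (p - 1) * (p - 2) * z ^ (p - 3)))
      - ((m : ℝ) - 2) * ((m : ℝ) - 4) * (1 - k ^ 2) / 4 *
          ((z ^ p) ^ 2 * (p * (p - 1) * z ^ (p - 2)) ^ 2)
    = 0 := by
  have hz0 : z ≠ 0 := hz.ne'
  have e1 : z ^ p = z * z ^ (p - 1) := by
    have h := Real.rpow_add hz 1 (p - 1)
    rw [Real.rpow_one, show (1 : ℝ) + (p - 1) = p by ring] at h
    exact h
  have e2 : z ^ (p - 2) = z ^ (p - 1) / z := by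
    have h := Real.rpow_sub hz (p - 1) 1
    rw [Real.rpow_one, show p - 1 - 1 = p - 2 by ring] at h
    exact h
  have e3 : z ^ (p - 3) = z ^ (p - 1) / z / z := by
    have h := Real.rpow_sub hz (p - 2) 1
    rw [Real.rpow_one, show p - 2 - 1 = p - 3 by ring, e2] at h
    exact h
  rw [e1, e2, e3, hk2]
  have hm1 : (m : ℝ) + 1 ≠ 0 := by positivity
  have hm24 : (m : ℝ) ^ 2 + 4 ≠ 0 := by positivity
  rcases hp with rfl | rfl
  · field_simp
    ring
  · field_simp
    ring

/-- Let `m ≥ 3` be an integer and `k > 0` with `k² = 1/(m+1)`. Then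
each of the functions `β z = z^(−1)` and `β z = z^((m²−2m)/(m²+4))` satisfies,
for every `z > 0`,
`m(1+k²)β'⁴ + ((m²−2m+2)(1−k²) − 2m)/2 · ββ'²β'' − (m−2)(1−k²)/2 · β²β'β'''
 − (m−2)(m−4)(1−k²)/4 · β²β''² = 0`. -/
theorem stmt3 (m : ℕ) (hm : 3 ≤ m) (k : ℝ) (hk : 0 < k)
    (hk2 : k ^ 2 = 1 / ((m : ℝ) + 1))
    (β : ℝ → ℝ)
    (hβ : (∀ z : ℝ, 0 < z → β z = z ^ (-1 : ℝ)) ∨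
          (∀ z : ℝ, 0 < z → β z = z ^ (((m : ℝ) ^ 2 - 2 * (m : ℝ)) / ((m : ℝ) ^ 2 + 4)))) :
    ∀ z : ℝ, 0 < z →
      (m : ℝ) * (1 + k ^ 2) * (deriv β z) ^ 4
        + (((m : ℝ) ^ 2 - 2 * (m : ℝ) + 2) * (1 - k ^ 2) - 2 * (m : ℝ)) / 2 *
            (β z * (deriv β z) ^ 2 * deriv (deriv β) z)
        - ((m : ℝ) - 2) * (1 - k ^ 2) / 2 *
            ((β z) ^ 2 * deriv β z * deriv (deriv (deriv β)) z)
        - ((m : ℝ) - 2) * ((m : ℝ) - 4) * (1 - k ^ 2) / 4 *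
            ((β z) ^ 2 * (deriv (deriv β) z) ^ 2)
      = 0 := by
  -- extract the exponent
  obtain ⟨p, hp, h0⟩ :
      ∃ p : ℝ, (p = -1 ∨ p = ((m : ℝ) ^ 2 - 2 * (m : ℝ)) / ((m : ℝ) ^ 2 + 4)) ∧
        ∀ z : ℝ, 0 < z → β z = 1 * z ^ p := by
    rcases hβ with h | h
    · exact ⟨-1, Or.inl rfl, fun z hz => by rw [one_mul]; exact h z hz⟩
    · exact ⟨_, Or.inr rfl, fun z hz => by rw [one_mul]; exact h z hz⟩
  have h1 := derivAux β 1 p h0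
  have h2 := derivAux (deriv β) (1 * p) (p - 1) h1
  have h3 := derivAux (deriv (deriv β)) (1 * p * (p - 1)) (p - 1 - 1) h2
  intro z hz
  rw [h0 z hz, h1 z hz, h2 z hz, h3 z hz]
  have := keyAlg m k p z hz hk2 hp
  calc _ = (m : ℝ) * (1 + k ^ 2) * (p * z ^ (p - 1)) ^ 4
      + (((m : ℝ) ^ 2 - 2 * (m : ℝ) + 2) * (1 - k ^ 2) - 2 * (m : ℝ)) / 2 *
          (z ^ p * (p * z ^ (p - 1)) ^ 2 * (p * (p - 1) * z ^ (p - 2)))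
      - ((m : ℝ) - 2) * (1 - k ^ 2) / 2 *
          ((z ^ p) ^ 2 * (p * z ^ (p - 1)) * (p * (p - 1) * (p - 2) * z ^ (p - 3)))
      - ((m : ℝ) - 2) * ((m : ℝ) - 4) * (1 - k ^ 2) / 4 *
          ((z ^ p) ^ 2 * (p * (p - 1) * z ^ (p - 2)) ^ 2) := by
        rw [show p - 1 - 1 = p - 2 by ring, show p - 2 - 1 = p - 3 by ring]
        ring
    _ = 0 := this
end

section
/- Let m ≥ 2 be an integer, C a real number, and t a nonzero real number. Define β : ℝ^{m+1} → ℝ by β(x₁,…,x_m,z) = (Σᵢ₌₁^m xᵢ + z + C)^t on the region U = {(x₁,…,x_m,z) : Σᵢ₌₁^m xᵢ + z + C > 0}. Then the expression Σᵢ₌₁^m (β·∂ᵢ∂ᵢβ − m·(∂ᵢβ)²) + m·(β·∂_z∂_zβ − 2·(∂_zβ)²) + ((m−2)/(2·∂_zβ))·Σᵢ₌₁^m (β²·∂ᵢ∂ᵢ∂_zβ − (m−2)·β·∂ᵢβ·∂ᵢ∂_zβ) + ((m−2)(m−4)/(4·(∂_zβ)²))·Σᵢ₌₁^m β²·(∂ᵢ∂_zβ)²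 vanishes at every point of U if and only if (m²+4)·t² + (2m+4)·t + 2m − m² = 0. -/
/-!
On `U`, every partial derivative of a function of `s = Σ xᵢ + z + C` is the derivative in `s`,
so `β = s^t` has all partial derivatives of order `k` equal to `t (t-1) ⋯ (t-k+1) s^(t-k)`.
Substituting these, each sum over `i` becomes `m` times one term, and the whole expression
collapses to `-m s^(2t-2) q / 4` with `q = (m²+4)t² + (2m+4)t + 2m − m²`; since `m s^(2t-2) ≠ 0`,
it vanishes exactly when `q` does.
-/

/-- The partial derivative of `f : ℝⁿ → ℝ` in the `i`-th coordinate direction. -/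
noncomputable def pd {n : ℕ} (i : Fin n) (f : (Fin n → ℝ) → ℝ) : (Fin n → ℝ) → ℝ :=
  fun x => deriv (fun s : ℝ => f (Function.update x i s)) (x i)

section CoordSum

variable {n : ℕ} (C : ℝ)

def coordSum (x : Fin n → ℝ) : ℝ := ∑ i, x i + C

lemma coordSum_update (x : Fin n → ℝ) (j : Fin n) (s : ℝ) :
    coordSum C (Function.update x j s) = coordSum C x + (s - x j) := by
  simp only [coordSum, Finset.sum_update_of_mem (Finset.mem_univ j),
    Finset.sdiff_singleton_eq_erase]
  rw [← Finset.add_sum_erase _ _ (Finset.mem_univ j)]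
  ring

lemma coordSum_succ (m : ℕ) (x : Fin (m + 1) → ℝ) :
    coordSum C x = (∑ i : Fin m, x i.castSucc) + x (Fin.last m) + C := by
  simp only [coordSum, Fin.sum_univ_castSucc]

lemma pd_eq_rpow_of_eq_on_pos {f : (Fin n → ℝ) → ℝ} {c r : ℝ}
    (hf : ∀ y, 0 < coordSum C y → f y = c * coordSum C y ^ r)
    (j : Fin n) : ∀ x, 0 < coordSum C x → pd j f x = c * r * coordSum C x ^ (r - 1) := by
  intro x hx
  set a := coordSum C x
  have hline : HasDerivAt (fun s : ℝ => c * (a + (s - x j)) ^ r) (c * r * a ^ (r - 1)) (x j) := by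
    have hinner : HasDerivAt (fun s : ℝ => a + (s - x j)) 1 (x j) :=
      ((hasDerivAt_id _).sub_const _).const_add _
    have hpow := (Real.hasDerivAt_rpow_const (x := a + (x j - x j)) (p := r)
      (Or.inl (by simpa using hx.ne'))).comp (x j) hinner
    simpa [mul_assoc] using hpow.const_mul c
  have hnear : ∀ᶠ s in nhds (x j), 0 < a + (s - x j) :=
    continuousAt_const.eventually_lt (by fun_prop)
      (show (0 : ℝ) < a + (x j - x j) by simpa using hx)
  refine (hline.congr_of_eventuallyEq ?_).deriv
  filter_upwards [hnear] with s hs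
  rw [hf _ (by rwa [coordSum_update]), coordSum_update]

end CoordSum

/-- The expression of the theorem once `β` and its partial derivatives of orders `1, 2, 3` are
replaced by `A^t`, `t A^(t-1)`, `t (t-1) A^(t-2)` and `t (t-1) (t-2) A^(t-3)`. -/
lemma pc1_rpow_eq (m : ℝ) {A t : ℝ} (hA : 0 < A) (ht : t ≠ 0) :
    m * (A ^ t * (t * (t - 1) * A ^ (t - 1 - 1)) - m * (t * A ^ (t - 1)) ^ 2)
      + m * (A ^ t * (t * (t - 1) * A ^ (t - 1 - 1)) - 2 * (t * A ^ (t - 1)) ^ 2)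
      + (m - 2) / (2 * (t * A ^ (t - 1))) *
          (m * ((A ^ t) ^ 2 * (t * (t - 1) * (t - 1 - 1) * A ^ (t - 1 - 1 - 1))
            - (m - 2) * A ^ t * (t * A ^ (t - 1)) * (t * (t - 1) * A ^ (t - 1 - 1))))
      + (m - 2) * (m - 4) / (4 * (t * A ^ (t - 1)) ^ 2) *
          (m * ((A ^ t) ^ 2 * (t * (t - 1) * A ^ (t - 1 - 1)) ^ 2))
    = -(m * (A ^ t) ^ 2 * ((m ^ 2 + 4) * t ^ 2 + (2 * m + 4) * t + 2 * m - m ^ 2)) / (4 * A ^ 2) := by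
  have hpow : A ^ t ≠ 0 := (Real.rpow_pos_of_pos hA t).ne'
  have hsub : ∀ r : ℝ, A ^ (r - 1) = A ^ r / A := fun r => by
    rw [Real.rpow_sub hA, Real.rpow_one]
  rw [hsub (t - 1 - 1), hsub (t - 1), hsub t]
  field_simp
  ring

/-- Let `m ≥ 2` be an integer, `C` real, `t ≠ 0` real, and
`β(x₁,…,x_m,z) = (Σᵢ xᵢ + z + C)^t` on the region `{Σᵢ xᵢ + z + C > 0}`. Then
the left-hand side of the PDE (pc1) vanishes at every point of the region iff
`(m²+4)t² + (2m+4)t + 2m − m² = 0`. -/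
theorem stmt5 (m : ℕ) (hm : 2 ≤ m) (C t : ℝ) (ht : t ≠ 0)
    (β : (Fin (m + 1) → ℝ) → ℝ)
    (hβ : ∀ x : Fin (m + 1) → ℝ,
      0 < (∑ i : Fin m, x i.castSucc) + x (Fin.last m) + C →
      β x = ((∑ i : Fin m, x i.castSucc) + x (Fin.last m) + C) ^ t) :
    (∀ x : Fin (m + 1) → ℝ,
        0 < (∑ i : Fin m, x i.castSucc) + x (Fin.last m) + C →
        (∑ i : Fin m,
            (β x * pd i.castSucc (pd i.castSucc β) x - (m : ℝ) * (pd i.castSucc β x) ^ 2))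
          + (m : ℝ) *
              (β x * pd (Fin.last m) (pd (Fin.last m) β) x - 2 * (pd (Fin.last m) β x) ^ 2)
          + (((m : ℝ) - 2) / (2 * pd (Fin.last m) β x)) *
              (∑ i : Fin m,
                ((β x) ^ 2 * pd i.castSucc (pd i.castSucc (pd (Fin.last m) β)) x
                  - ((m : ℝ) - 2) * β x * pd i.castSucc β x *
                      pd i.castSucc (pd (Fin.last m) β) x))
          + (((m : ℝ) - 2) * ((m : ℝ) - 4) / (4 * (pd (Fin.last m) β x) ^ 2)) *
              (∑ i : Fin m, (β x) ^ 2 * (pd i.castSucc (pd (Fin.last m) β) x) ^ 2)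
        = 0)
      ↔ ((m : ℝ) ^ 2 + 4) * t ^ 2 + (2 * (m : ℝ) + 4) * t + 2 * (m : ℝ) - (m : ℝ) ^ 2 = 0 := by
  simp only [← coordSum_succ] at hβ ⊢
  have h0 : ∀ y, 0 < coordSum C y → β y = 1 * coordSum C y ^ t := by
    simpa only [one_mul] using hβ
  have h1 := fun j => pd_eq_rpow_of_eq_on_pos C h0 j
  have h2 := fun j k => pd_eq_rpow_of_eq_on_pos C (h1 k) j
  have h3 := fun j k l => pd_eq_rpow_of_eq_on_pos C (h2 k l) j
  simp +contextual only [h0, h1, h2, h3, one_mul, Finset.sum_const, Finset.card_univ,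
    Fintype.card_fin, nsmul_eq_mul]
  refine (forall₂_congr fun x hx => by rw [pc1_rpow_eq (m : ℝ) hx ht]).trans ⟨fun h => ?_, ?_⟩
  · let x₀ : Fin (m + 1) → ℝ := Function.update 0 0 (1 - C)
    have hx₀ : coordSum C x₀ = 1 := by
      rw [coordSum_update]
      simp [coordSum]
    have hm0 : (m : ℝ) ≠ 0 := Nat.cast_ne_zero.mpr (by omega)
    simpa [hx₀, hm0] using h x₀ (by rw [hx₀]; exact one_pos)
  · intro hq x hx
    simp [hq]
end

section
/- Let c₁, c₂, c₃, c₄ be real constants and let β : ℝ³ → ℝ be defined by β(x₁,x₂,z) = ((c₁x₁ + c₂)(c₃z + c₄))⁻¹ on the region U = {(x₁,x₂,z) : (c₁x₁ + c₂)(c₃z + c₄) ≠ 0}. Then at every point of U, Σᵢ₌₁² (β·∂ᵢ∂ᵢβ − 2·(∂ᵢβ)²) + 2·(β·∂_z∂_zβ − 2·(∂_zβ)²) = 0. -/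
/-!
Along every coordinate line, `β` is the reciprocal of an affine function `s ↦ a s + b`, and
`g = (a s + b)⁻¹` satisfies `g g'' = 2 g'²` since `g' = -a g²` and `g'' = 2 a² g³`.
Each summand therefore vanishes on its own.
-/

open Filter Topology

theorem eventually_affine_ne_zero {a b t : ℝ} (ht : a * t + b ≠ 0) :
    ∀ᶠ s in 𝓝 t, a * s + b ≠ 0 :=
  (by fun_prop : Continuous fun s => a * s + b).continuousAt.eventually_ne ht

theorem hasDerivAt_inv_affine {a b t : ℝ} (ht : a * t + b ≠ 0) :
    HasDerivAt (fun s => (a * s + b)⁻¹) (-a / (a * t + b) ^ 2) t := by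
  simpa using (((hasDerivAt_id t).const_mul a).add_const b).fun_inv ht

theorem mul_deriv_deriv_sub_two_mul_sq_eq_zero_of_eventuallyEq_inv_affine {g : ℝ → ℝ}
    {a b t : ℝ} (ht : a * t + b ≠ 0) (hg : g =ᶠ[𝓝 t] fun s => (a * s + b)⁻¹) :
    g t * deriv (deriv g) t - 2 * deriv g t ^ 2 = 0 := by
  have hg' : deriv g =ᶠ[𝓝 t] fun s => -a * ((a * s + b) ^ 2)⁻¹ := by
    filter_upwards [hg.eventuallyEq_nhds, eventually_affine_ne_zero ht] with s hgs hs
    rw [hgs.deriv_eq, (hasDerivAt_inv_affine hs).deriv, div_eq_mul_inv]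
  have hg'' : HasDerivAt (fun s => -a * ((a * s + b) ^ 2)⁻¹)
      (-a * (-(2 * (a * t + b) * a) / ((a * t + b) ^ 2) ^ 2)) t := by
    simpa using (((((hasDerivAt_id t).const_mul a).add_const b).fun_pow 2).fun_inv
      (pow_ne_zero 2 ht)).const_mul (-a)
  rw [hg.eq_of_nhds, hg'.deriv_eq, hg'.eq_of_nhds, hg''.deriv]
  field_simp
  ring

theorem pd_pd_eq_deriv_deriv {n : ℕ} (i : Fin n) (f : (Fin n → ℝ) → ℝ) (x : Fin n → ℝ) :
    pd i (pd i f) x = deriv (deriv fun s => f (Function.update x i s)) (x i) := by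
  simp only [pd, Function.update_self, Function.update_idem]

theorem mul_pd_pd_sub_two_mul_sq_eq_zero_of_inv_affine {n : ℕ} {f w : (Fin n → ℝ) → ℝ}
    {i : Fin n} {x : Fin n → ℝ} {a b : ℝ} (hf : ∀ y, w y ≠ 0 → f y = (w y)⁻¹)
    (hline : ∀ s, w (Function.update x i s) = a * s + b) (hx : w x ≠ 0) :
    f x * pd i (pd i f) x - 2 * pd i f x ^ 2 = 0 := by
  have ht : a * x i + b ≠ 0 := by rwa [← hline, Function.update_eq_self]
  have hline_f : (fun s => f (Function.update x i s)) =ᶠ[𝓝 (x i)]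
      fun s => (a * s + b)⁻¹ := by
    filter_upwards [eventually_affine_ne_zero ht] with s hs
    rw [hf _ (by rwa [hline]), hline]
  simpa [pd_pd_eq_deriv_deriv, pd] using
    mul_deriv_deriv_sub_two_mul_sq_eq_zero_of_eventuallyEq_inv_affine ht hline_f

/-- Let `c₁, c₂, c₃, c₄` be real constants and
`β(x₁,x₂,z) = ((c₁x₁ + c₂)(c₃z + c₄))⁻¹` on `U = {(c₁x₁+c₂)(c₃z+c₄) ≠ 0}`.
Then at every point of `U`,
`Σᵢ₌₁² (β ∂ᵢ∂ᵢβ − 2(∂ᵢβ)²) + 2(β ∂_z∂_zβ − 2(∂_zβ)²) = 0`. -/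
theorem stmt7 (c₁ c₂ c₃ c₄ : ℝ) (β : (Fin 3 → ℝ) → ℝ)
    (hβ : ∀ x : Fin 3 → ℝ, (c₁ * x 0 + c₂) * (c₃ * x 2 + c₄) ≠ 0 →
      β x = ((c₁ * x 0 + c₂) * (c₃ * x 2 + c₄))⁻¹) :
    ∀ x : Fin 3 → ℝ, (c₁ * x 0 + c₂) * (c₃ * x 2 + c₄) ≠ 0 →
      (∑ i : Fin 2,
          (β x * pd i.castSucc (pd i.castSucc β) x - 2 * (pd i.castSucc β x) ^ 2))
        + 2 * (β x * pd 2 (pd 2 β) x - 2 * (pd 2 β x) ^ 2) = 0 := by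
  intro x hx
  have haffine : ∀ i : Fin 3, ∃ a b : ℝ, ∀ s, (c₁ * Function.update x i s 0 + c₂) *
      (c₃ * Function.update x i s 2 + c₄) = a * s + b := by
    intro i
    fin_cases i
    · exact ⟨c₁ * (c₃ * x 2 + c₄), c₂ * (c₃ * x 2 + c₄), fun s => by simp; ring⟩
    · exact ⟨0, (c₁ * x 0 + c₂) * (c₃ * x 2 + c₄), fun s => by simp⟩
    · exact ⟨(c₁ * x 0 + c₂) * c₃, (c₁ * x 0 + c₂) * c₄, fun s => by simp; ring⟩
  have hterm : ∀ i : Fin 3, β x * pd i (pd i β) x - 2 * pd i β x ^ 2 = 0 := fun i =>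
    let ⟨_, _, hline⟩ := haffine i
    mul_pd_pd_sub_two_mul_sq_eq_zero_of_inv_affine hβ hline hx
  rw [Fin.sum_univ_two, hterm, hterm, hterm]
  norm_num
end

section
/- Let m ≥ 1 be an integer, t and C real numbers, and define β : ℝ^{m+1} → ℝ by β(x₁,…,x_{m+1}) = (x_{m+1} + C)^t on the region {x_{m+1} + C > 0}. Then for every point x of this region and all vectors X, Y ∈ ℝ^{m+1}, Σᵢ₌₁^{m+1} Σⱼ₌₁^{m+1} (XᵢXⱼ + YᵢYⱼ)·β(x)·∂ᵢ∂ⱼβ(x) − Σᵢ₌₁^{m+1} (∂ᵢβ(x))² = ((X_{m+1}² + Y_{m+1}²)·t(t−1) − t²)·(x_{m+1} + C)^{2t−2}. Moreover, if 0 < t < 1, this quantity is strictly negative for all X, Y ∈ ℝ^{m+1}. -/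
/-- Let `m ≥ 1` be an integer, `t, C` real, and
`β(x₁,…,x_{m+1}) = (x_{m+1} + C)^t` on the region `{x_{m+1} + C > 0}`. Then for
every point `x` of the region and all `X, Y ∈ ℝ^{m+1}`,
`Σᵢ Σⱼ (XᵢXⱼ + YᵢYⱼ) β(x) ∂ᵢ∂ⱼβ(x) − Σᵢ (∂ᵢβ(x))²
 = ((X_{m+1}² + Y_{m+1}²) t(t−1) − t²)(x_{m+1} + C)^{2t−2}`.
Moreover, if `0 < t < 1`, this quantity is strictly negative for all `X, Y`. -/
theorem stmt9 (m : ℕ) (hm : 1 ≤ m) (t C : ℝ)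
    (β : (Fin (m + 1) → ℝ) → ℝ)
    (hβ : ∀ x : Fin (m + 1) → ℝ, 0 < x (Fin.last m) + C →
      β x = (x (Fin.last m) + C) ^ t) :
    ∀ x : Fin (m + 1) → ℝ, 0 < x (Fin.last m) + C →
      ∀ X Y : Fin (m + 1) → ℝ,
        ((∑ i : Fin (m + 1), ∑ j : Fin (m + 1),
              (X i * X j + Y i * Y j) * β x * pd i (pd j β) x)
            - ∑ i : Fin (m + 1), (pd i β x) ^ 2
          = (((X (Fin.last m)) ^ 2 + (Y (Fin.last m)) ^ 2) * (t * (t - 1)) - t ^ 2) *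
              (x (Fin.last m) + C) ^ (2 * t - 2))
        ∧ (0 < t → t < 1 →
            (∑ i : Fin (m + 1), ∑ j : Fin (m + 1),
                (X i * X j + Y i * Y j) * β x * pd i (pd j β) x)
              - ∑ i : Fin (m + 1), (pd i β x) ^ 2 < 0) := by
  intro x hx X Y
  set L := Fin.last m with hLdef
  have hpd_ne : ∀ (i : Fin (m+1)), i ≠ L → ∀ y : Fin (m+1) → ℝ, 0 < y L + C →
      pd i β y = 0 := by
    intro i hi y hy
    have hfun : (fun s : ℝ => β (Function.update y i s)) = fun _ => (y L + C) ^ t := by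
      funext s
      rw [hβ _ (by rwa [Function.update_of_ne (Ne.symm hi)]),
        Function.update_of_ne (Ne.symm hi)]
    simp [pd, hfun]
  have hpd_last : ∀ y : Fin (m+1) → ℝ, 0 < y L + C →
      pd L β y = t * (y L + C) ^ (t - 1) := by
    intro y hy
    have hpos : ∀ᶠ s : ℝ in nhds (y L), 0 < s + C := by
      have h' : ∀ᶠ s : ℝ in nhds (y L), -C < s := eventually_gt_nhds (by linarith)
      filter_upwards [h'] with s hs; linarith
    have hev : (fun s : ℝ => β (Function.update y L s)) =ᶠ[nhds (y L)]
        fun s => (s + C) ^ t := by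
      filter_upwards [hpos] with s hs
      have h0 : 0 < Function.update y L s L + C := by rwa [Function.update_self]
      rw [hβ _ h0, Function.update_self]
    have h1 : HasDerivAt (fun s : ℝ => s + C) 1 (y L) := (hasDerivAt_id _).add_const C
    have hd := h1.rpow_const (p := t) (Or.inl (ne_of_gt hy))
    rw [pd, hev.deriv_eq, hd.deriv]
    ring
  -- second derivatives at x
  have hA : pd L (pd L β) x = t * (t - 1) * (x L + C) ^ (t - 2) := by
    have hpos : ∀ᶠ s : ℝ in nhds (x L), 0 < s + C := by
      have h' : ∀ᶠ s : ℝ in nhds (x L), -C < s := eventually_gt_nhds (by linarith)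
      filter_upwards [h'] with s hs; linarith
    have hev : (fun s : ℝ => pd L β (Function.update x L s)) =ᶠ[nhds (x L)]
        fun s => t * (s + C) ^ (t - 1) := by
      filter_upwards [hpos] with s hs
      have h0 : 0 < Function.update x L s L + C := by rwa [Function.update_self]
      rw [hpd_last _ h0, Function.update_self]
    have h1 : HasDerivAt (fun s : ℝ => s + C) 1 (x L) := (hasDerivAt_id _).add_const C
    have hd := (h1.rpow_const (p := t - 1) (Or.inl (ne_of_gt hx))).const_mul t
    rw [pd, hev.deriv_eq, hd.deriv]
    have he : t - 1 - 1 = t - 2 := by ring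
    rw [he]; ring
  have hB : ∀ i j : Fin (m+1), i ≠ L → pd i (pd j β) x = 0 := by
    intro i j hi
    by_cases hj : j = L
    · rw [hj]
      have hfun : (fun s : ℝ => pd L β (Function.update x i s))
          = fun _ => t * (x L + C) ^ (t - 1) := by
        funext s
        rw [hpd_last _ (by rwa [Function.update_of_ne (Ne.symm hi)]),
          Function.update_of_ne (Ne.symm hi)]
      rw [show pd i (pd L β) x
          = deriv (fun s => pd L β (Function.update x i s)) (x i) from rfl,
        hfun, deriv_const]
    · have hfun : (fun s : ℝ => pd j β (Function.update x i s)) = fun _ => (0 : ℝ) := by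
        funext s
        rw [hpd_ne j hj _ (by rwa [Function.update_of_ne (Ne.symm hi)])]
      rw [show pd i (pd j β) x
          = deriv (fun s => pd j β (Function.update x i s)) (x i) from rfl,
        hfun, deriv_const]
  have hC : ∀ j : Fin (m+1), j ≠ L → pd L (pd j β) x = 0 := by
    intro j hj
    have hpos : ∀ᶠ s : ℝ in nhds (x L), 0 < s + C := by
      have h' : ∀ᶠ s : ℝ in nhds (x L), -C < s := eventually_gt_nhds (by linarith)
      filter_upwards [h'] with s hs; linarith
    have hev : (fun s : ℝ => pd j β (Function.update x L s)) =ᶠ[nhds (x L)]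
        fun _ => (0 : ℝ) := by
      filter_upwards [hpos] with s hs
      exact hpd_ne j hj _ (by rwa [Function.update_self])
    rw [pd, hev.deriv_eq, deriv_const]
  have hsum2 : (∑ i : Fin (m+1), ∑ j : Fin (m+1),
        (X i * X j + Y i * Y j) * β x * pd i (pd j β) x)
      = (X L * X L + Y L * Y L) * β x * (t * (t - 1) * (x L + C) ^ (t - 2)) := by
    rw [Finset.sum_eq_single L]
    · rw [Finset.sum_eq_single L]
      · rw [hA]
      · intro j _ hj; rw [hC j hj, mul_zero]
      · simp
    · intro i _ hi
      exact Finset.sum_eq_zero fun j _ => by rw [hB i j hi, mul_zero]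
    · simp
  have hsum1 : (∑ i : Fin (m+1), (pd i β x) ^ 2) = (t * (x L + C) ^ (t - 1)) ^ 2 := by
    rw [Finset.sum_eq_single L]
    · rw [hpd_last x hx]
    · intro i _ hi; rw [hpd_ne i hi x hx]; ring
    · simp
  have h1 : (x L + C) ^ t * (x L + C) ^ (t - 2) = (x L + C) ^ (2 * t - 2) := by
    rw [← Real.rpow_add hx]; ring_nf
  have h2 : ((x L + C) ^ (t - 1)) ^ 2 = (x L + C) ^ (2 * t - 2) := by
    rw [sq, ← Real.rpow_add hx]; ring_nf
  have key : (∑ i : Fin (m+1), ∑ j : Fin (m+1),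
        (X i * X j + Y i * Y j) * β x * pd i (pd j β) x)
      - ∑ i : Fin (m+1), (pd i β x) ^ 2
      = (((X L) ^ 2 + (Y L) ^ 2) * (t * (t - 1)) - t ^ 2) * (x L + C) ^ (2 * t - 2) := by
    rw [hsum2, hsum1, hβ x hx, mul_pow, h2]
    linear_combination (X L * X L + Y L * Y L) * (t * (t - 1)) * h1
  refine ⟨key, fun ht0 ht1 => ?_⟩
  rw [key]
  apply mul_neg_of_neg_of_pos
  · have hn : ((X L) ^ 2 + (Y L) ^ 2) * (t * (t - 1)) ≤ 0 :=
      mul_nonpos_of_nonneg_of_nonpos (by positivity) (by nlinarith)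
    nlinarith [pow_pos ht0 2]
  · exact Real.rpow_pos_of_pos hx _
end

section
/- Let m ≥ 1 be an integer, t and C real numbers, and define β : ℝ^{m+1} → ℝ by β(x₁,…,x_{m+1}) = (Σᵢ₌₁^{m+1} xᵢ + C)^t on the region {Σᵢ₌₁^{m+1} xᵢ + C > 0}. Then for every point x of this region and all vectors X, Y ∈ ℝ^{m+1}, Σᵢ₌₁^{m+1} Σⱼ₌₁^{m+1} (XᵢXⱼ + YᵢYⱼ)·β(x)·∂ᵢ∂ⱼβ(x) − Σᵢ₌₁^{m+1} (∂ᵢβ(x))² = (((Σᵢ₌₁^{m+1} Xᵢ)² + (Σᵢ₌₁^{m+1} Yᵢ)²)·t(t−1) − (m+1)·t²)·(Σᵢ₌₁^{m+1} xᵢ + C)^{2t−2}. Moreover, if 0 < t < 1, this quantity is strictly negative for all X, Y ∈ ℝ^{m+1}. -/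
open Filter Topology

section PartialDerivative

variable {n : ℕ} {i : Fin n} {x : Fin n → ℝ} {f g : (Fin n → ℝ) → ℝ}

theorem Filter.EventuallyEq.pd_eq (h : f =ᶠ[𝓝 x] g) : pd i f x = pd i g x := by
  have hline : Tendsto (fun s : ℝ => Function.update x i s) (𝓝 (x i)) (𝓝 x) := by
    simpa using ((continuous_const (y := x)).update i continuous_id).tendsto (x i)
  exact EventuallyEq.deriv_eq (hline.eventually h)

theorem Filter.EventuallyEq.pd (h : f =ᶠ[𝓝 x] g) : pd i f =ᶠ[𝓝 x] pd i g :=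
  h.eventuallyEq_nhds.mono fun _ hy => hy.pd_eq

theorem pd_comp_sum_add_const (i : Fin n) (g : ℝ → ℝ) (C : ℝ) :
    pd i (fun y => g ((∑ k, y k) + C)) = fun y => deriv g ((∑ k, y k) + C) := by
  funext y
  have hline : ∀ s : ℝ, (∑ k, Function.update y i s k) + C
      = s + ((∑ k, y k) - y i + C) := fun s => by
    rw [Finset.sum_update_of_mem (Finset.mem_univ i), Finset.sdiff_singleton_eq_erase,
      Finset.sum_erase_eq_sub (Finset.mem_univ i)]
    ring
  simp only [pd, hline, deriv_comp_add_const]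
  ring_nf

theorem pd_pd_comp_sum_add_const (i j : Fin n) (g : ℝ → ℝ) (C : ℝ) :
    pd i (pd j fun y => g ((∑ k, y k) + C)) = fun y => deriv (deriv g) ((∑ k, y k) + C) := by
  rw [pd_comp_sum_add_const, pd_comp_sum_add_const]

end PartialDerivative

theorem Real.deriv_deriv_rpow_const (p u : ℝ) :
    deriv (deriv fun x : ℝ => x ^ p) u = p * (p - 1) * u ^ (p - 2) := by
  rw [Real.deriv_rpow_const', deriv_const_mul_field, Real.deriv_rpow_const, sub_sub,
    one_add_one_eq_two, mul_assoc]

theorem sum_sum_mul_add_mul {ι : Type*} [Fintype ι] (X Y : ι → ℝ) :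
    ∑ i, ∑ j, (X i * X j + Y i * Y j) = (∑ i, X i) ^ 2 + (∑ i, Y i) ^ 2 := by
  simp only [Finset.sum_add_distrib, ← Finset.mul_sum, ← Finset.sum_mul]
  ring

theorem stmt10_general (m : ℕ) (t C : ℝ)
    (β : (Fin (m + 1) → ℝ) → ℝ)
    (hβ : ∀ x : Fin (m + 1) → ℝ, 0 < (∑ i : Fin (m + 1), x i) + C →
      β x = ((∑ i : Fin (m + 1), x i) + C) ^ t) :
    ∀ x : Fin (m + 1) → ℝ, 0 < (∑ i : Fin (m + 1), x i) + C →
      ∀ X Y : Fin (m + 1) → ℝ,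
        ((∑ i : Fin (m + 1), ∑ j : Fin (m + 1),
              (X i * X j + Y i * Y j) * β x * pd i (pd j β) x)
            - ∑ i : Fin (m + 1), (pd i β x) ^ 2
          = (((∑ i : Fin (m + 1), X i) ^ 2 + (∑ i : Fin (m + 1), Y i) ^ 2) * (t * (t - 1))
                - ((m : ℝ) + 1) * t ^ 2) *
              ((∑ i : Fin (m + 1), x i) + C) ^ (2 * t - 2))
        ∧ (0 < t → t < 1 →
            (∑ i : Fin (m + 1), ∑ j : Fin (m + 1),
                (X i * X j + Y i * Y j) * β x * pd i (pd j β) x)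
              - ∑ i : Fin (m + 1), (pd i β x) ^ 2 < 0) := by
  intro x hx X Y
  set u := (∑ i, x i) + C
  have hregion : IsOpen {y : Fin (m + 1) → ℝ | 0 < (∑ k, y k) + C} :=
    isOpen_lt continuous_const (by fun_prop)
  have hβ_near : β =ᶠ[𝓝 x] fun y => ((∑ k, y k) + C) ^ t := by
    filter_upwards [hregion.mem_nhds hx] with y hy using hβ y hy
  have hβx : β x = u ^ t := hβ x hx
  have hβ' : ∀ i, pd i β x = t * u ^ (t - 1) := fun i =>
    hβ_near.pd_eq.trans <|
      (congrFun (pd_comp_sum_add_const i (· ^ t) C) x).trans (Real.deriv_rpow_const _ _)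
  have hβ'' : ∀ i j, pd i (pd j β) x = t * (t - 1) * u ^ (t - 2) := fun i j =>
    hβ_near.pd.pd_eq.trans <|
      (congrFun (pd_pd_comp_sum_add_const i j (· ^ t) C) x).trans
        (Real.deriv_deriv_rpow_const _ _)
  have hexp : ∀ a b : ℝ, a + b = 2 * t - 2 → u ^ a * u ^ b = u ^ (2 * t - 2) :=
    fun a b hab => by rw [← Real.rpow_add hx, hab]
  have key : (∑ i, ∑ j, (X i * X j + Y i * Y j) * β x * pd i (pd j β) x) - ∑ i, (pd i β x) ^ 2
      = (((∑ i, X i) ^ 2 + (∑ i, Y i) ^ 2) * (t * (t - 1)) - ((m : ℝ) + 1) * t ^ 2)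
          * u ^ (2 * t - 2) := by
    simp only [hβ', hβ'', hβx, ← Finset.sum_mul, sum_sum_mul_add_mul, Finset.sum_const,
      Finset.card_univ, Fintype.card_fin, nsmul_eq_mul]
    push_cast
    linear_combination
      ((∑ i, X i) ^ 2 + (∑ i, Y i) ^ 2) * (t * (t - 1)) * hexp t (t - 2) (by ring)
        - ((m : ℝ) + 1) * t ^ 2 * hexp (t - 1) (t - 1) (by ring)
  refine ⟨key, fun ht0 ht1 => key ▸ mul_neg_of_neg_of_pos ?_ (Real.rpow_pos_of_pos hx _)⟩
  have : t * (t - 1) < 0 := mul_neg_of_pos_of_neg ht0 (by linarith)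
  nlinarith [sq_nonneg (∑ i, X i), sq_nonneg (∑ i, Y i)]

/-- Let `m ≥ 1` be an integer, `t, C` real, and
`β(x₁,…,x_{m+1}) = (Σᵢ xᵢ + C)^t` on the region `{Σᵢ xᵢ + C > 0}`. Then for
every point `x` of the region and all `X, Y ∈ ℝ^{m+1}`,
`Σᵢ Σⱼ (XᵢXⱼ + YᵢYⱼ) β(x) ∂ᵢ∂ⱼβ(x) − Σᵢ (∂ᵢβ(x))²
 = (((ΣᵢXᵢ)² + (ΣᵢYᵢ)²) t(t−1) − (m+1)t²)(Σᵢ xᵢ + C)^{2t−2}`.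
Moreover, if `0 < t < 1`, this quantity is strictly negative for all `X, Y`. -/
theorem stmt10 (m : ℕ) (hm : 1 ≤ m) (t C : ℝ)
    (β : (Fin (m + 1) → ℝ) → ℝ)
    (hβ : ∀ x : Fin (m + 1) → ℝ, 0 < (∑ i : Fin (m + 1), x i) + C →
      β x = ((∑ i : Fin (m + 1), x i) + C) ^ t) :
    ∀ x : Fin (m + 1) → ℝ, 0 < (∑ i : Fin (m + 1), x i) + C →
      ∀ X Y : Fin (m + 1) → ℝ,
        ((∑ i : Fin (m + 1), ∑ j : Fin (m + 1),
              (X i * X j + Y i * Y j) * β x * pd i (pd j β) x)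
            - ∑ i : Fin (m + 1), (pd i β x) ^ 2
          = (((∑ i : Fin (m + 1), X i) ^ 2 + (∑ i : Fin (m + 1), Y i) ^ 2) * (t * (t - 1))
                - ((m : ℝ) + 1) * t ^ 2) *
              ((∑ i : Fin (m + 1), x i) + C) ^ (2 * t - 2))
        ∧ (0 < t → t < 1 →
            (∑ i : Fin (m + 1), ∑ j : Fin (m + 1),
                (X i * X j + Y i * Y j) * β x * pd i (pd j β) x)
              - ∑ i : Fin (m + 1), (pd i β x) ^ 2 < 0) :=
  stmt10_general m t C β hβ
end
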